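/- arXiv:2103.01541 — 2 statements merged into one kernel-verified Lean document; each statement's English description precedes it below -/
import Mathlib

section
/- The success probability is monotone non-increasing in the number of players: for all t ≥ 1 and n ≥ 1, p(t+1, n) ≤ p(t, n), where p(t, n) is the maximal winning probability in the t-player Levine hat game with hat stacks encoded by {0,1}^n and dictator winning sets. -/
open Set

/-- One-player winning sets: dictatorships `W_i = {x : x i = true}` in `B = {0,1}^n`. -/
def Dict (n : ℕ) (i : Fin n) : Set (Fin n → Bool) := {x | x i = true}

/-- A strategy for the `t`-player hat game: player `i` sees all coordinates except `i`
and names a dictatorship (an index in `Fin n`). -/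
def Strategy (n t : ℕ) : Type :=
  ∀ i : Fin t, ({j : Fin t // j ≠ i} → (Fin n → Bool)) → Fin n

/-- The winning set of a strategy: all configurations where every player's own hat stack
belongs to the dictatorship she names. -/
def winSet {n t : ℕ} (f : Strategy n t) : Set (Fin t → Fin n → Bool) :=
  {x | ∀ i : Fin t, x i ∈ Dict n (f i (fun j => x j.1))}

/-- `p t n`: the maximal success probability (uniform measure of the winning set)
in the `t`-player hat game with stacks encoded by `{0,1}^n`. -/
noncomputable def hatValue (t n : ℕ) : ℝ :=
  sSup {μ : ℝ | ∃ f : Strategy n t, μ = (winSet f).ncard / 2 ^ (n * t)}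

/-- Restriction of a `(t+1)`-player strategy to the first `t` players, fixing the last
player's hat stack to `y`. -/
def restrictStrat {n t : ℕ} (f : Strategy n (t + 1)) (y : Fin n → Bool) : Strategy n t :=
  fun i v => f i.castSucc (fun j =>
    if h : j.1 = Fin.last t then y
    else v ⟨j.1.castPred h, fun he => j.2 (by rw [← Fin.castSucc_castPred j.1 h, he])⟩)

lemma init_mem_winSet {n t : ℕ} (f : Strategy n (t + 1))
    {x : Fin (t + 1) → Fin n → Bool} (hx : x ∈ winSet f) :
    Fin.init x ∈ winSet (restrictStrat f (x (Fin.last t))) := by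
  intro i
  have harg : (fun j : {j : Fin t // j ≠ i} => Fin.init x j.1)
      = fun j => x j.1.castSucc := rfl
  have : (restrictStrat f (x (Fin.last t)) i (fun j => Fin.init x j.1))
      = f i.castSucc (fun j => x j.1) := by
    unfold restrictStrat
    congr 1
    funext j
    by_cases h : j.1 = Fin.last t
    · simp [h]
    · simp only [h, dif_neg, not_false_iff]
      show Fin.init x _ = x j.1
      unfold Fin.init
      rw [Fin.castSucc_castPred]
  rw [show Fin.init x i = x i.castSucc from rfl, this]
  exact hx i.castSucc

lemma card_cube (t n : ℕ) : Fintype.card (Fin t → Fin n → Bool) = 2 ^ (n * t) := by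
  simp [Fintype.card_fun, pow_mul]

lemma hat_bdd (t n : ℕ) :
    BddAbove {μ : ℝ | ∃ f : Strategy n t, μ = (winSet f).ncard / 2 ^ (n * t)} := by
  refine ⟨1, ?_⟩
  rintro μ ⟨f, rfl⟩
  rw [div_le_one (by positivity)]
  have h1 : (winSet f).ncard ≤ 2 ^ (n * t) := by
    have := Set.ncard_le_ncard (Set.subset_univ (winSet f)) Set.finite_univ
    simpa [Set.ncard_univ, Nat.card_eq_fintype_card, card_cube, pow_mul] using this
  exact_mod_cast h1

/-- The success probability is monotone non-increasing in the number of players. -/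
theorem hatValue_succ_le (t n : ℕ) (ht : 1 ≤ t) (hn : 1 ≤ n) :
    hatValue (t + 1) n ≤ hatValue t n := by
  have hbdd := hat_bdd t n
  have hne : Nonempty (Fin n) := ⟨⟨0, hn⟩⟩
  have hnonneg : (0 : ℝ) ≤ hatValue t n := by
    have hmem : ((winSet (fun _ _ => (⟨0, hn⟩ : Fin n) : Strategy n t)).ncard : ℝ) / 2 ^ (n * t)
        ∈ {μ : ℝ | ∃ f : Strategy n t, μ = (winSet f).ncard / 2 ^ (n * t)} := ⟨_, rfl⟩
    exact le_trans (by positivity) (le_csSup hbdd hmem)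
  apply Real.sSup_le _ hnonneg
  rintro μ ⟨f, rfl⟩
  -- pick the best restriction
  set c : (Fin n → Bool) → ℕ := fun y => (winSet (restrictStrat f y)).ncard with hc
  obtain ⟨y0, -, hy0⟩ := Finset.exists_mem_eq_sup Finset.univ Finset.univ_nonempty c
  have hle : ∀ y, c y ≤ c y0 := fun y => hy0 ▸ Finset.le_sup (Finset.mem_univ y)
  -- injection into the sigma type
  have hcard : (winSet f).ncard ≤ 2 ^ n * c y0 := by
    have hinj : (winSet f).ncard ≤ ∑ y : Fin n → Bool, c y := by
      rw [Nat.card_coe_set_eq (winSet f) |>.symm]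
      have : Nat.card (winSet f)
          ≤ Nat.card ((y : Fin n → Bool) × winSet (restrictStrat f y)) := by
        apply Nat.card_le_card_of_injective
          (fun x => ⟨x.1 (Fin.last t), ⟨Fin.init x.1, init_mem_winSet f x.2⟩⟩)
        rintro ⟨x, hx⟩ ⟨x', hx'⟩ h
        have h1 : x (Fin.last t) = x' (Fin.last t) := congrArg Sigma.fst h
        have h2 : Fin.init x = Fin.init x' := by
          have := congrArg
            (fun s : (y : Fin n → Bool) × winSet (restrictStrat f y) =>
              (s.2 : Fin t → Fin n → Bool)) h
          simpa using this
        have hxx : x = x' := by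
          rw [← Fin.snoc_init_self x, ← Fin.snoc_init_self x', h1, h2]
        simp [hxx]
      calc Nat.card (winSet f) ≤ _ := this
        _ = ∑ y : Fin n → Bool, c y := by
            classical
            letI : ∀ y : Fin n → Bool, Fintype (winSet (restrictStrat f y)) :=
              fun y => Fintype.ofFinite _
            rw [Nat.card_eq_fintype_card, Fintype.card_sigma]
            congr 1
            funext y
            simp only [hc]
            rw [← Nat.card_coe_set_eq, Nat.card_eq_fintype_card]
    have hsum : ∑ y : Fin n → Bool, c y ≤ 2 ^ n * c y0 := by
      calc ∑ y : Fin n → Bool, c y ≤ Finset.univ.card • c y0 :=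
            Finset.sum_le_card_nsmul _ _ _ (fun y _ => hle y)
        _ = 2 ^ n * c y0 := by simp [Finset.card_univ, smul_eq_mul]
    exact le_trans hinj hsum
  -- convert to reals
  have hmem : ((c y0 : ℝ) / 2 ^ (n * t))
      ∈ {μ : ℝ | ∃ g : Strategy n t, μ = (winSet g).ncard / 2 ^ (n * t)} :=
    ⟨restrictStrat f y0, rfl⟩
  have hreal : ((winSet f).ncard : ℝ) / 2 ^ (n * (t + 1)) ≤ (c y0 : ℝ) / 2 ^ (n * t) := by
    rw [div_le_div_iff₀ (by positivity) (by positivity)]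
    have : ((winSet f).ncard : ℝ) ≤ 2 ^ n * c y0 := by exact_mod_cast hcard
    calc ((winSet f).ncard : ℝ) * 2 ^ (n * t) ≤ (2 ^ n * c y0) * 2 ^ (n * t) := by
          apply mul_le_mul_of_nonneg_right this (by positivity)
      _ = (c y0 : ℝ) * 2 ^ (n * (t + 1)) := by rw [mul_add, pow_add, mul_one]; ring
  exact le_trans hreal (le_csSup hbdd hmem)
end

section
/- In the shift graph on [m] × [m], every blocker (a set meeting every maximum independent set) has size at least m/2. -/
open Set Finset

/-- In the shift graph on `[m] × [m]` (`m` even), whose maximum independent sets are the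
products `A × B` over equipartitions `(A, B)` of `[m]`, every blocker (a set meeting every
maximum independent set) has size at least `m/2`. -/
theorem shiftGraph_blocker_lower_bound (m : ℕ) (hm : Even m)
    (T : Set (Fin m × Fin m))
    (hT : ∀ A B : Finset (Fin m), Disjoint A B → A ∪ B = Finset.univ → A.card = m / 2 →
      (T ∩ (A ×ˢ B : Finset (Fin m × Fin m))).Nonempty) :
    m / 2 ≤ T.ncard := by
  by_contra h
  push_neg at h
  -- S : first coordinates of T
  have hTfin : T.Finite := Set.toFinite T
  set S : Finset (Fin m) := hTfin.toFinset.image Prod.fst with hSdef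
  have hScard : S.card ≤ T.ncard := by
    refine (Finset.card_image_le).trans ?_
    rw [Set.ncard_eq_toFinset_card T hTfin]
  have hSle : S.card ≤ m / 2 := hScard.trans h.le
  have hle : m / 2 ≤ Fintype.card (Fin m) := by
    rw [Fintype.card_fin]; exact Nat.div_le_self m 2
  obtain ⟨B, hSB, hBcard⟩ := Finset.exists_superset_card_eq hSle hle
  have hAcard : Bᶜ.card = m / 2 := by
    rw [Finset.card_compl, hBcard, Fintype.card_fin]
    obtain ⟨k, hk⟩ := hm
    omega
  obtain ⟨⟨a, b⟩, hmem⟩ := hT Bᶜ B disjoint_compl_left (by ext x; simp; tauto) hAcard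
  obtain ⟨haT, hab⟩ := hmem
  simp only [Finset.coe_product, Set.mem_prod] at hab
  have haS : a ∈ S := by
    rw [hSdef]
    exact Finset.mem_image.mpr ⟨(a, b), hTfin.mem_toFinset.mpr haT, rfl⟩
  exact (Finset.mem_compl.mp hab.1) (hSB haS)
end
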